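/- arXiv:1804.05001 — 4 statements merged into one kernel-verified Lean document; each statement's English description precedes it below -/
import Mathlib

section
/- Let ℓ, u ∈ ℝ with ℓ ≤ x*(s) ≤ u for all s, let s_I be a state (the initial state), let ε > 0, and let k ≥ 0 be such that y_k(s_I)·(u − ℓ) < 2·ε. Then the value r := x_k(s_I) + y_k(s_I)·(ℓ + u)/2 returned by sound value iteration satisfies |r − x*(s_I)| < ε. -/
open Matrix

lemma pow_entry_nonneg {n : ℕ} (Q : Matrix (Fin n) (Fin n) ℝ)
    (hQ : ∀ s s', 0 ≤ Q s s') (k : ℕ) : ∀ i j, 0 ≤ (Q ^ k) i j := by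
  induction k with
  | zero => intro i j; simp [Matrix.one_apply]; positivity
  | succ k ih =>
    intro i j
    rw [pow_succ, Matrix.mul_apply]
    exact Finset.sum_nonneg fun m _ => mul_nonneg (ih i m) (hQ m j)

/-- correctness part of Theorem 2: if `ℓ ≤ x*(s) ≤ u` for all `s`,
`ε > 0`, and `y_k(s_I)·(u − ℓ) < 2·ε`, then
`r = x_k(s_I) + y_k(s_I)·(ℓ+u)/2` satisfies `|r − x*(s_I)| < ε`. -/
theorem sound_vi_returned_value_correct (n : ℕ) (hn : 1 ≤ n)
    (Q : Matrix (Fin n) (Fin n) ℝ) (b : Fin n → ℝ)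
    (hQ : ∀ s s', 0 ≤ Q s s') (hb : ∀ s, 0 ≤ b s)
    (hrow : ∀ s, (∑ s', Q s s') + b s ≤ 1)
    (xstar : Fin n → ℝ)
    (hfix : xstar = Q.mulVec xstar + b)
    (hx01 : ∀ s, 0 ≤ xstar s ∧ xstar s ≤ 1)
    (ℓ u : ℝ) (hℓ : ∀ s, ℓ ≤ xstar s) (hu : ∀ s, xstar s ≤ u)
    (sI : Fin n) (ε : ℝ) (hε : 0 < ε) (k : ℕ)
    (hstop : ((Q ^ k).mulVec (fun _ => (1 : ℝ))) sI * (u - ℓ) < 2 * ε) :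
    |((∑ i ∈ Finset.range k, (Q ^ i).mulVec b) sI
        + ((Q ^ k).mulVec (fun _ => (1 : ℝ))) sI * ((ℓ + u) / 2)) - xstar sI| < ε := by
  have key : ∀ m : ℕ, xstar = (∑ i ∈ Finset.range m, (Q ^ i).mulVec b)
      + (Q ^ m).mulVec xstar := by
    intro m
    induction m with
    | zero => simp
    | succ m ih =>
      have : (Q ^ m).mulVec xstar = (Q ^ m).mulVec b + (Q ^ (m + 1)).mulVec xstar := by
        conv_lhs => rw [hfix]
        rw [Matrix.mulVec_add, Matrix.mulVec_mulVec, ← pow_succ, add_comm]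
      conv_lhs => rw [ih, this]
      rw [Finset.sum_range_succ]
      abel
  have hpos := pow_entry_nonneg Q hQ k
  set y := ((Q ^ k).mulVec (fun _ => (1 : ℝ))) sI with hy
  set t := ((Q ^ k).mulVec xstar) sI with ht
  have hxs : xstar sI = (∑ i ∈ Finset.range k, (Q ^ i).mulVec b) sI + t := by
    conv_lhs => rw [key k]
    simp
    exact ht.symm
  have hyt : ℓ * y ≤ t ∧ t ≤ u * y := by
    constructor
    · rw [hy, ht, Matrix.mulVec, Matrix.mulVec, dotProduct, dotProduct, Finset.mul_sum]
      exact Finset.sum_le_sum fun j _ => by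
        have := hℓ j
        nlinarith [hpos sI j]
    · rw [hy, ht, Matrix.mulVec, Matrix.mulVec, dotProduct, dotProduct, Finset.mul_sum]
      exact Finset.sum_le_sum fun j _ => by
        have := hu j
        nlinarith [hpos sI j]
  rw [hxs]
  rw [abs_lt]
  constructor <;> nlinarith [hyt.1, hyt.2]
end

section
/- Assume additionally that Q^k·𝟙 → 0 componentwise as k → ∞ (the chain is contracting). Then for every ε > 0 and every state s_I there exists k ≥ 0 such that y_k(s) < 1 for all s and y_k(s_I)·( max_{s} x_k(s)/(1 − y_k(s)) − min_{s} x_k(s)/(1 − y_k(s)) ) < 2·ε. (This is the termination part of Theorem 2: the stopping criterion of sound value iteration is eventually satisfied.) -/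
open Filter Matrix

private lemma pow_nonneg_entries {n : ℕ} (Q : Matrix (Fin n) (Fin n) ℝ)
    (hQ : ∀ s s', 0 ≤ Q s s') : ∀ k s s', 0 ≤ (Q ^ k) s s' := by
  intro k
  induction k with
  | zero => intro s s'; simp [Matrix.one_apply]; positivity
  | succ k ih =>
      intro s s'
      rw [pow_succ, Matrix.mul_apply]
      exact Finset.sum_nonneg fun j _ => mul_nonneg (ih s j) (hQ j s')

private lemma key_invariant {n : ℕ} (Q : Matrix (Fin n) (Fin n) ℝ) (b : Fin n → ℝ)
    (hQ : ∀ s s', 0 ≤ Q s s') (hb : ∀ s, 0 ≤ b s)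
    (hrow : ∀ s, (∑ s', Q s s') + b s ≤ 1) :
    ∀ k s, (∑ i ∈ Finset.range k, (Q ^ i).mulVec b) s
      + ((Q ^ k).mulVec (fun _ => (1 : ℝ))) s ≤ 1 := by
  intro k
  induction k with
  | zero => intro s; simp [Matrix.mulVec, Matrix.one_apply, dotProduct]
  | succ k ih =>
      intro s
      have hx : (∑ i ∈ Finset.range (k + 1), (Q ^ i).mulVec b) s
          = b s + Q.mulVec (∑ i ∈ Finset.range k, (Q ^ i).mulVec b) s := by
        rw [Finset.sum_range_succ']
        have h : ∀ i, (Q ^ (i + 1)).mulVec b = Q.mulVec ((Q ^ i).mulVec b) := by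
          intro i; rw [pow_succ', Matrix.mulVec_mulVec]
        simp only [h, pow_zero, Matrix.one_mulVec, Pi.add_apply, Finset.sum_apply,
          Matrix.mulVec, dotProduct, Finset.mul_sum]
        rw [Finset.sum_comm]
        ring
      have hy : ((Q ^ (k + 1)).mulVec (fun _ => (1 : ℝ))) s
          = Q.mulVec ((Q ^ k).mulVec (fun _ => (1 : ℝ))) s := by
        rw [pow_succ', Matrix.mulVec_mulVec]
      rw [hx, hy]
      have h1 : Q.mulVec (∑ i ∈ Finset.range k, (Q ^ i).mulVec b) s
          + Q.mulVec ((Q ^ k).mulVec (fun _ => (1 : ℝ))) s ≤ ∑ s', Q s s' := by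
        simp only [Matrix.mulVec, dotProduct]
        rw [← Finset.sum_add_distrib]
        apply Finset.sum_le_sum
        intro j _
        rw [← mul_add]
        calc Q s j * ((∑ i ∈ Finset.range k, (Q ^ i).mulVec b) j
              + ((Q ^ k).mulVec (fun _ => (1 : ℝ))) j)
            ≤ Q s j * 1 := mul_le_mul_of_nonneg_left (ih j) (hQ s j)
          _ = Q s j := mul_one _
      linarith [hrow s]

/-- termination part of Theorem 2: if the chain is contracting, i.e.
`Q^k·𝟙 → 0` componentwise, then for every `ε > 0` and state `s_I` there is a `k`
with `y_k(s) < 1` for all `s` and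
`y_k(s_I)·(max_s x_k(s)/(1−y_k(s)) − min_s x_k(s)/(1−y_k(s))) < 2·ε`. -/
theorem sound_vi_termination (n : ℕ) (hn : 1 ≤ n)
    (Q : Matrix (Fin n) (Fin n) ℝ) (b : Fin n → ℝ)
    (hQ : ∀ s s', 0 ≤ Q s s') (hb : ∀ s, 0 ≤ b s)
    (hrow : ∀ s, (∑ s', Q s s') + b s ≤ 1)
    (hcontr : ∀ s : Fin n,
      Tendsto (fun k : ℕ => ((Q ^ k).mulVec (fun _ => (1 : ℝ))) s) atTop (nhds 0)) :
    ∀ ε : ℝ, 0 < ε → ∀ sI : Fin n, ∃ k : ℕ,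
      (∀ s, ((Q ^ k).mulVec (fun _ => (1 : ℝ))) s < 1) ∧
      ((Q ^ k).mulVec (fun _ => (1 : ℝ))) sI *
        ((⨆ s : Fin n, (∑ i ∈ Finset.range k, (Q ^ i).mulVec b) s
            / (1 - ((Q ^ k).mulVec (fun _ => (1 : ℝ))) s)) -
         (⨅ s : Fin n, (∑ i ∈ Finset.range k, (Q ^ i).mulVec b) s
            / (1 - ((Q ^ k).mulVec (fun _ => (1 : ℝ))) s))) < 2 * ε := by
  intro ε hε sI
  haveI : Nonempty (Fin n) := ⟨⟨0, hn⟩⟩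
  set y : ℕ → Fin n → ℝ := fun k => (Q ^ k).mulVec (fun _ => (1 : ℝ)) with hy
  set x : ℕ → Fin n → ℝ := fun k => ∑ i ∈ Finset.range k, (Q ^ i).mulVec b with hxdef
  have hy0 : ∀ k s, 0 ≤ y k s := by
    intro k s
    simp only [hy, Matrix.mulVec, dotProduct, mul_one]
    exact Finset.sum_nonneg fun j _ => pow_nonneg_entries Q hQ k s j
  have hx0 : ∀ k s, 0 ≤ x k s := by
    intro k s
    simp only [hxdef, Finset.sum_apply]
    apply Finset.sum_nonneg
    intro i _
    simp only [Matrix.mulVec, dotProduct]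
    exact Finset.sum_nonneg fun j _ => mul_nonneg (pow_nonneg_entries Q hQ i s j) (hb j)
  have hinv := key_invariant Q b hQ hb hrow
  -- eventually all y k s < 1 and y k sI < 2 ε
  have h1 : ∀ᶠ k in atTop, ∀ s : Fin n, y k s < 1 := by
    rw [eventually_all]
    intro s
    exact (hcontr s).eventually_lt_const one_pos
  have h2 : ∀ᶠ k in atTop, y k sI < 2 * ε := by
    exact (hcontr sI).eventually_lt_const (by linarith)
  obtain ⟨k, hk1, hk2⟩ := (h1.and h2).exists
  refine ⟨k, hk1, ?_⟩
  set r : Fin n → ℝ := fun s => x k s / (1 - y k s) with hr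
  have hr01 : ∀ s, 0 ≤ r s ∧ r s ≤ 1 := by
    intro s
    have hpos : 0 < 1 - y k s := by linarith [hk1 s]
    constructor
    · exact div_nonneg (hx0 k s) hpos.le
    · rw [div_le_one hpos]
      linarith [hinv k s]
  have hsup : (⨆ s, r s) ≤ 1 := ciSup_le fun s => (hr01 s).2
  have hinf : 0 ≤ ⨅ s, r s := le_ciInf fun s => (hr01 s).1
  calc y k sI * ((⨆ s, r s) - ⨅ s, r s)
      ≤ y k sI * 1 := mul_le_mul_of_nonneg_left (by linarith) (hy0 k sI)
    _ = y k sI := mul_one _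
    _ < 2 * ε := hk2
end

section
/- Gauss-Seidel variant: let ≺ be a strict linear order on Fin n, and split Q = L + U where L(s,s') := Q(s,s') if s' ≺ s and L(s,s') := 0 otherwise, and U := Q − L. Then L is nilpotent, I − L is invertible, and (I − L)^{-1} = Σ_{i=0}^{n−1} L^i has nonnegative entries. Define H := (I − L)^{-1}·U, c := (I − L)^{-1}·b, x̃_k := Σ_{i=0}^{k−1} H^i c, and ỹ_k := H^k·𝟙. Then x* satisfies x* = H·x* + c, and for every k ≥ 0 with ỹ_k(s) < 1 for all s and every state ŝ: x̃_k(ŝ) + ỹ_k(ŝ)·min_{s} x̃_k(s)/(1 − ỹ_k(s)) ≤ x*(ŝ) ≤ x̃_k(ŝ) + ỹ_k(ŝ)·max_{s} x̃_k(s)/(1 − ỹ_k(s)). -/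
open Matrix

/-- Auxiliary: product of entrywise-nonnegative matrices is entrywise nonnegative. -/
lemma svi_mul_nonneg {n : ℕ} {A B : Matrix (Fin n) (Fin n) ℝ}
    (hA : ∀ s s', 0 ≤ A s s') (hB : ∀ s s', 0 ≤ B s s') :
    ∀ s s', 0 ≤ (A * B) s s' := by
  intro s s'
  rw [Matrix.mul_apply]
  exact Finset.sum_nonneg fun t _ => mul_nonneg (hA s t) (hB t s')

/-- Auxiliary: powers of an entrywise-nonnegative matrix are entrywise nonnegative. -/
lemma svi_pow_nonneg {n : ℕ} {A : Matrix (Fin n) (Fin n) ℝ}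
    (hA : ∀ s s', 0 ≤ A s s') (k : ℕ) :
    ∀ s s', 0 ≤ (A ^ k) s s' := by
  induction k with
  | zero =>
    intro s s'
    simp only [pow_zero, Matrix.one_apply]
    split <;> norm_num
  | succ k ih =>
    rw [pow_succ]
    exact svi_mul_nonneg ih hA

/-- Auxiliary: `mulVec` of nonnegative matrix and vector is nonnegative. -/
lemma svi_mulVec_nonneg {n : ℕ} {A : Matrix (Fin n) (Fin n) ℝ} {v : Fin n → ℝ}
    (hA : ∀ s s', 0 ≤ A s s') (hv : ∀ s, 0 ≤ v s) :
    ∀ s, 0 ≤ A.mulVec v s := by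
  intro s
  simp only [Matrix.mulVec, dotProduct]
  exact Finset.sum_nonneg fun t _ => mul_nonneg (hA s t) (hv t)

/-- Auxiliary: the abstract sound-value-iteration bounds for a fixed point of an
affine map with nonnegative linear part and offset. -/
lemma svi_bounds {n : ℕ} (hn : 1 ≤ n) (H : Matrix (Fin n) (Fin n) ℝ)
    (c xstar : Fin n → ℝ)
    (hHnn : ∀ s s', 0 ≤ H s s') (hcnn : ∀ s, 0 ≤ c s)
    (hfix : xstar = H.mulVec xstar + c) :
    ∀ k : ℕ,
      (∀ s, ((H ^ k).mulVec (fun _ => (1 : ℝ))) s < 1) →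
      ∀ t : Fin n,
        (∑ i ∈ Finset.range k, (H ^ i).mulVec c) t
            + ((H ^ k).mulVec (fun _ => (1 : ℝ))) t *
              (⨅ s : Fin n, (∑ i ∈ Finset.range k, (H ^ i).mulVec c) s
                  / (1 - ((H ^ k).mulVec (fun _ => (1 : ℝ))) s))
          ≤ xstar t ∧
        xstar t ≤
          (∑ i ∈ Finset.range k, (H ^ i).mulVec c) t
            + ((H ^ k).mulVec (fun _ => (1 : ℝ))) t *
              (⨆ s : Fin n, (∑ i ∈ Finset.range k, (H ^ i).mulVec c) s
                  / (1 - ((H ^ k).mulVec (fun _ => (1 : ℝ))) s)) := by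
  haveI : NeZero n := ⟨by omega⟩
  intro k hk t
  set A : Matrix (Fin n) (Fin n) ℝ := H ^ k with hA
  set yk : Fin n → ℝ := A.mulVec (fun _ => (1 : ℝ)) with hyk
  set xk : Fin n → ℝ := ∑ i ∈ Finset.range k, (H ^ i).mulVec c with hxk
  have hAnn : ∀ s s', 0 ≤ A s s' := svi_pow_nonneg hHnn k
  have hykrow : ∀ s, yk s = ∑ t, A s t := by
    intro s
    simp [hyk, Matrix.mulVec, dotProduct]
  have hpos : ∀ s, 0 < 1 - yk s := fun s => by linarith [hk s]
  have hxknn : ∀ s, 0 ≤ xk s := by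
    intro s
    rw [hxk, Finset.sum_apply]
    exact Finset.sum_nonneg fun i _ =>
      svi_mulVec_nonneg (svi_pow_nonneg hHnn i) hcnn s
  -- the iterated fixpoint identity
  have hiter : ∀ j : ℕ, xstar = (∑ i ∈ Finset.range j, (H ^ i).mulVec c)
      + (H ^ j).mulVec xstar := by
    intro j
    induction j with
    | zero => simp [Matrix.one_mulVec]
    | succ j ih =>
      have hHx : H.mulVec xstar = xstar - c := by
        nth_rewrite 2 [hfix]; abel
      rw [Finset.sum_range_succ, pow_succ, ← Matrix.mulVec_mulVec, hHx,
        Matrix.mulVec_sub]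
      nth_rewrite 1 [ih]
      abel
  have hpt : ∀ s, xstar s = xk s + ∑ u, A s u * xstar u := by
    intro s
    have := congrFun (hiter k) s
    simpa [hxk, Matrix.mulVec, dotProduct, ← hA] using this
  set m : ℝ := ⨅ s : Fin n, xk s / (1 - yk s) with hm
  set M : ℝ := ⨆ s : Fin n, xk s / (1 - yk s) with hM
  -- upper bound: all xstar s ≤ M
  obtain ⟨s0, -, hmax⟩ := Finset.exists_max_image Finset.univ xstar
    Finset.univ_nonempty
  have hub0 : xstar s0 ≤ xk s0 / (1 - yk s0) := by
    rw [le_div_iff₀ (hpos s0)]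
    have h1 : ∑ u, A s0 u * xstar u ≤ yk s0 * xstar s0 := by
      rw [hykrow, Finset.sum_mul]
      exact Finset.sum_le_sum fun u _ =>
        mul_le_mul_of_nonneg_left (hmax u (Finset.mem_univ u)) (hAnn s0 u)
    have := hpt s0
    nlinarith
  have hub0' : xk s0 / (1 - yk s0) ≤ M := by
    rw [hM]
    exact le_ciSup (f := fun s : Fin n => xk s / (1 - yk s))
      (Finite.bddAbove_range _) s0
  have hub : ∀ s, xstar s ≤ M :=
    fun s => ((hmax s (Finset.mem_univ s)).trans hub0).trans hub0'
  -- lower bound: all xstar s ≥ m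
  obtain ⟨s1, -, hmin⟩ := Finset.exists_min_image Finset.univ xstar
    Finset.univ_nonempty
  have hlb0 : xk s1 / (1 - yk s1) ≤ xstar s1 := by
    rw [div_le_iff₀ (hpos s1)]
    have h1 : yk s1 * xstar s1 ≤ ∑ u, A s1 u * xstar u := by
      rw [hykrow, Finset.sum_mul]
      exact Finset.sum_le_sum fun u _ =>
        mul_le_mul_of_nonneg_left (hmin u (Finset.mem_univ u)) (hAnn s1 u)
    have := hpt s1
    nlinarith
  have hlb0' : m ≤ xk s1 / (1 - yk s1) := by
    rw [hm]
    exact ciInf_le (f := fun s : Fin n => xk s / (1 - yk s))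
      (Finite.bddBelow_range _) s1
  have hlb : ∀ s, m ≤ xstar s :=
    fun s => ((hlb0'.trans hlb0)).trans (hmin s (Finset.mem_univ s))
  -- combine
  have hmain := hpt t
  constructor
  · have : yk t * m ≤ ∑ u, A t u * xstar u := by
      rw [hykrow, Finset.sum_mul]
      exact Finset.sum_le_sum fun u _ =>
        mul_le_mul_of_nonneg_left (hlb u) (hAnn t u)
    linarith
  · have : ∑ u, A t u * xstar u ≤ yk t * M := by
      rw [hykrow, Finset.sum_mul]
      exact Finset.sum_le_sum fun u _ =>
        mul_le_mul_of_nonneg_left (hub u) (hAnn t u)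
    linarith

/-- Gauss-Seidel variant: splitting `Q = L + U` along a strict linear
order `≺` (with `L` the strictly-lower part), `L` is nilpotent, `I − L` is invertible
with nonnegative inverse `(I − L)⁻¹ = Σ_{i<n} L^i`; `x*` is a fixed point of the
Gauss-Seidel map, and the sound-value-iteration bounds hold for
`H = (I−L)⁻¹U`, `c = (I−L)⁻¹b`. -/
theorem sound_vi_gauss_seidel (n : ℕ) (hn : 1 ≤ n)
    (Q : Matrix (Fin n) (Fin n) ℝ) (b : Fin n → ℝ)
    (hQ : ∀ s s', 0 ≤ Q s s') (hb : ∀ s, 0 ≤ b s)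
    (hrow : ∀ s, (∑ s', Q s s') + b s ≤ 1)
    (xstar : Fin n → ℝ)
    (hfix : xstar = Q.mulVec xstar + b)
    (hx01 : ∀ s, 0 ≤ xstar s ∧ xstar s ≤ 1)
    (prec : Fin n → Fin n → Prop) [DecidableRel prec]
    (hprec : IsStrictTotalOrder (Fin n) prec)
    (L U : Matrix (Fin n) (Fin n) ℝ)
    (hL : ∀ s s', L s s' = if prec s' s then Q s s' else 0)
    (hU : U = Q - L) :
    IsNilpotent L ∧
    IsUnit (1 - L) ∧
    (1 - L)⁻¹ = ∑ i ∈ Finset.range n, L ^ i ∧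
    (∀ s s', 0 ≤ (1 - L)⁻¹ s s') ∧
    xstar = ((1 - L)⁻¹ * U).mulVec xstar + (1 - L)⁻¹.mulVec b ∧
    (∀ k : ℕ,
      (∀ s, ((((1 - L)⁻¹ * U) ^ k).mulVec (fun _ => (1 : ℝ))) s < 1) →
      ∀ t : Fin n,
        (∑ i ∈ Finset.range k, (((1 - L)⁻¹ * U) ^ i).mulVec ((1 - L)⁻¹.mulVec b)) t
            + ((((1 - L)⁻¹ * U) ^ k).mulVec (fun _ => (1 : ℝ))) t *
              (⨅ s : Fin n,
                (∑ i ∈ Finset.range k,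
                    (((1 - L)⁻¹ * U) ^ i).mulVec ((1 - L)⁻¹.mulVec b)) s
                  / (1 - ((((1 - L)⁻¹ * U) ^ k).mulVec (fun _ => (1 : ℝ))) s))
          ≤ xstar t ∧
        xstar t ≤
          (∑ i ∈ Finset.range k, (((1 - L)⁻¹ * U) ^ i).mulVec ((1 - L)⁻¹.mulVec b)) t
            + ((((1 - L)⁻¹ * U) ^ k).mulVec (fun _ => (1 : ℝ))) t *
              (⨆ s : Fin n,
                (∑ i ∈ Finset.range k,
                    (((1 - L)⁻¹ * U) ^ i).mulVec ((1 - L)⁻¹.mulVec b)) s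
                  / (1 - ((((1 - L)⁻¹ * U) ^ k).mulVec (fun _ => (1 : ℝ))) s))) := by
  have hirr : ∀ a, ¬ prec a a := fun a => hprec.toIrrefl.irrefl a
  have htrans : ∀ {a b c}, prec a b → prec b c → prec a c :=
    fun {a b c} h1 h2 => hprec.toIsTrans.trans a b c h1 h2
  -- rank function
  set r : Fin n → ℕ := fun s => (Finset.univ.filter (fun s' => prec s' s)).card
    with hr
  have hrlt : ∀ {s t}, prec t s → r t < r s := by
    intro s t h
    apply Finset.card_lt_card
    constructor
    · intro u hu
      simp only [Finset.mem_filter, Finset.mem_univ, true_and] at *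
      exact htrans hu h
    · intro hsub
      have := hsub (Finset.mem_filter.mpr ⟨Finset.mem_univ t, h⟩)
      simp only [Finset.mem_filter, Finset.mem_univ, true_and] at this
      exact hirr t this
  have hLzero : ∀ j (s s' : Fin n), r s < j → (L ^ j) s s' = 0 := by
    intro j
    induction j with
    | zero => intro s s' h; omega
    | succ j ih =>
      intro s s' h
      rw [pow_succ', Matrix.mul_apply]
      apply Finset.sum_eq_zero
      intro u _
      by_cases hu : prec u s
      · rw [ih u s' (by have := hrlt hu; omega), mul_zero]
      · rw [hL s u, if_neg hu, zero_mul]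
  have hrn : ∀ s, r s < n := by
    intro s
    have hsub : (Finset.univ.filter (fun s' => prec s' s)) ⊆
        Finset.univ.erase s := by
      intro u hu
      simp only [Finset.mem_filter, Finset.mem_univ, true_and] at hu
      exact Finset.mem_erase.mpr ⟨fun he => hirr s (he ▸ hu), Finset.mem_univ u⟩
    have := Finset.card_le_card hsub
    rw [Finset.card_erase_of_mem (Finset.mem_univ s), Finset.card_univ,
      Fintype.card_fin] at this
    simp only [hr]
    omega
  have hLn : L ^ n = 0 := by
    ext s s'
    exact hLzero n s s' (hrn s)
  have hnil : IsNilpotent L := ⟨n, hLn⟩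
  -- geometric series inverse
  set S : Matrix (Fin n) (Fin n) ℝ := ∑ i ∈ Finset.range n, L ^ i with hS
  have hSL : (1 - L) * S = 1 := by
    have h := mul_geom_sum L n
    rw [hLn] at h
    have : (1 - L) * S = -((L - 1) * S) := by rw [← neg_mul, neg_sub]
    rw [this, h]
    simp
  have hdet : IsUnit (1 - L).det := Matrix.isUnit_det_of_right_inverse hSL
  have hunit : IsUnit (1 - L) := (Matrix.isUnit_iff_isUnit_det _).mpr hdet
  have hinv : (1 - L)⁻¹ = S := Matrix.inv_eq_right_inv hSL
  -- nonnegativity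
  have hLnn : ∀ s s', 0 ≤ L s s' := by
    intro s s'
    rw [hL]
    split
    · exact hQ s s'
    · exact le_refl 0
  have hinvnn : ∀ s s', 0 ≤ (1 - L)⁻¹ s s' := by
    intro s s'
    rw [hinv, hS, Matrix.sum_apply]
    exact Finset.sum_nonneg fun i _ => svi_pow_nonneg hLnn i s s'
  have hUnn : ∀ s s', 0 ≤ U s s' := by
    intro s s'
    rw [hU, Matrix.sub_apply, hL]
    split
    · simp
    · simp [hQ s s']
  have hHnn : ∀ s s', 0 ≤ ((1 - L)⁻¹ * U) s s' := svi_mul_nonneg hinvnn hUnn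
  have hcnn : ∀ s, 0 ≤ (1 - L)⁻¹.mulVec b s := svi_mulVec_nonneg hinvnn hb
  -- Gauss-Seidel fixed point
  have hfixGS : xstar = ((1 - L)⁻¹ * U).mulVec xstar + (1 - L)⁻¹.mulVec b := by
    have h1 : (1 - L).mulVec xstar = U.mulVec xstar + b := by
      rw [Matrix.sub_mulVec, Matrix.one_mulVec, hU, Matrix.sub_mulVec]
      nth_rewrite 1 [hfix]
      abel
    have h2 := congrArg (fun v => (1 - L)⁻¹.mulVec v) h1
    simp only [Matrix.mulVec_add, Matrix.mulVec_mulVec,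
      Matrix.nonsing_inv_mul _ hdet, Matrix.one_mulVec] at h2
    exact h2
  exact ⟨hnil, hunit, hinv.trans hS, hinvnn, hfixGS,
    svi_bounds hn _ _ _ hHnn hcnn hfixGS⟩
end

section
/- Correctness of sound value iteration for MDPs: let ℓ, u ∈ ℝ with ℓ ≤ x*(s) ≤ u for all s, let k ≥ 0, let σ be a k-step scheduler such that x^σ(s) + y^σ(s)·u = T^k(u·𝟙)(s) for all s, let s_I be a state (the initial state), and let ε > 0 with y^σ(s_I)·(u − ℓ) < 2·ε. Then the returned value r := x^σ(s_I) + y^σ(s_I)·(ℓ + u)/2 satisfies |r − x*(s_I)| < ε, i.e., r is an ε-approximation of the maximal reachability probability Pr^max(◇G). -/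
open Matrix

/-- `xSched q bb k π s = Pr^π_s(◇^{≤k} G)`: the probability of reaching the goal set
within `k` steps from `s` under the `k`-step scheduler `π` (head of `π` applied first). -/
def xSched {n : ℕ} {α : Type} (q : Fin n → α → Fin n → ℝ) (bb : Fin n → α → ℝ) :
    (k : ℕ) → (Fin k → Fin n → α) → Fin n → ℝ
  | 0, _, _ => 0
  | k + 1, π, s =>
      bb s (π 0 s) + ∑ s', q s (π 0 s) s' * xSched q bb k (fun i => π i.succ) s'

/-- `ySched q k π s = Pr^π_s(□^{≤k} S?)`: the probability of remaining among the
unknown states throughout the first `k` steps under the `k`-step scheduler `π`. -/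
def ySched {n : ℕ} {α : Type} (q : Fin n → α → Fin n → ℝ) :
    (k : ℕ) → (Fin k → Fin n → α) → Fin n → ℝ
  | 0, _, _ => 1
  | k + 1, π, s => ∑ s', q s (π 0 s) s' * ySched q k (fun i => π i.succ) s'

/-- The Bellman operator `T(x)(s) = max_{a ∈ A s} (b_a(s) + Σ_{s'} q_a(s,s')·x(s'))`. -/
def bellman {n : ℕ} {α : Type} (A : Fin n → Finset α) (hA : ∀ s, (A s).Nonempty)
    (q : Fin n → α → Fin n → ℝ) (bb : Fin n → α → ℝ) (x : Fin n → ℝ) : Fin n → ℝ :=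
  fun s => (A s).sup' (hA s) fun a => bb s a + ∑ s', q s a s' * x s'

lemma bellman_mono {n : ℕ} {α : Type} (A : Fin n → Finset α) (hA : ∀ s, (A s).Nonempty)
    (q : Fin n → α → Fin n → ℝ) (bb : Fin n → α → ℝ)
    (hq : ∀ s a, a ∈ A s → ∀ s', 0 ≤ q s a s')
    {x y : Fin n → ℝ} (hxy : ∀ s, x s ≤ y s) (s : Fin n) :
    bellman A hA q bb x s ≤ bellman A hA q bb y s := by
  apply Finset.sup'_le
  intro a ha
  refine le_trans ?_ (Finset.le_sup' _ ha)
  gcongr with s' _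
  exacts [hq s a ha s', hxy s']

lemma xstar_le_iter {n : ℕ} {α : Type} (A : Fin n → Finset α) (hA : ∀ s, (A s).Nonempty)
    (q : Fin n → α → Fin n → ℝ) (bb : Fin n → α → ℝ)
    (hq : ∀ s a, a ∈ A s → ∀ s', 0 ≤ q s a s')
    (xstar : Fin n → ℝ) (hfix : bellman A hA q bb xstar = xstar)
    (u : ℝ) (hu : ∀ s, xstar s ≤ u) :
    ∀ k s, xstar s ≤ (bellman A hA q bb)^[k] (fun _ => u) s := by
  intro k
  induction k with
  | zero => simpa using hu
  | succ k ih =>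
      intro s
      rw [Function.iterate_succ_apply']
      calc xstar s = bellman A hA q bb xstar s := by rw [hfix]
        _ ≤ _ := bellman_mono A hA q bb hq ih s

lemma lower_bound {n : ℕ} {α : Type} (A : Fin n → Finset α) (hA : ∀ s, (A s).Nonempty)
    (q : Fin n → α → Fin n → ℝ) (bb : Fin n → α → ℝ)
    (hq : ∀ s a, a ∈ A s → ∀ s', 0 ≤ q s a s')
    (xstar : Fin n → ℝ) (hfix : bellman A hA q bb xstar = xstar)
    (ℓ : ℝ) (hℓ : ∀ s, ℓ ≤ xstar s) :
    ∀ k (π : Fin k → Fin n → α), (∀ i s, π i s ∈ A s) →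
      ∀ s, xSched q bb k π s + ySched q k π s * ℓ ≤ xstar s := by
  intro k
  induction k with
  | zero =>
      intro π _ s
      simpa [xSched, ySched] using hℓ s
  | succ k ih =>
      intro π hπ s
      have h1 : ∀ s', q s (π 0 s) s' * xSched q bb k (fun i => π i.succ) s'
          + q s (π 0 s) s' * ySched q k (fun i => π i.succ) s' * ℓ
          ≤ q s (π 0 s) s' * xstar s' := by
        intro s'
        have := ih (fun i => π i.succ) (fun i t => hπ i.succ t) s'
        have hq0 := hq s (π 0 s) (hπ 0 s) s'
        nlinarith
      calc xSched q bb (k+1) π s + ySched q (k+1) π s * ℓ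
          = bb s (π 0 s) + ∑ s', (q s (π 0 s) s' * xSched q bb k (fun i => π i.succ) s'
            + q s (π 0 s) s' * ySched q k (fun i => π i.succ) s' * ℓ) := by
            simp [xSched, ySched, Finset.sum_add_distrib, Finset.sum_mul]
            ring
        _ ≤ bb s (π 0 s) + ∑ s', q s (π 0 s) s' * xstar s' := by
            gcongr with s' _
            exact h1 s'
        _ ≤ bellman A hA q bb xstar s := by unfold bellman; exact Finset.le_sup' (fun a => bb s a + ∑ s', q s a s' * xstar s') (hπ 0 s)
        _ = xstar s := by rw [hfix]

/-- Theorem 5, correctness of sound value iteration for MDPs: if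
`ℓ ≤ x*(s) ≤ u` for all `s`, the `k`-step scheduler `σ` maximizes
`x^σ(s) + y^σ(s)·u` (attains `T^k(u·𝟙)(s)`) at every state, and
`y^σ(s_I)·(u − ℓ) < 2·ε`, then the returned value
`r = x^σ(s_I) + y^σ(s_I)·(ℓ+u)/2` satisfies `|r − x*(s_I)| < ε`. -/
theorem sound_vi_mdp_returned_value_correct {α : Type} (n : ℕ) (hn : 1 ≤ n)
    (A : Fin n → Finset α) (hA : ∀ s, (A s).Nonempty)
    (q : Fin n → α → Fin n → ℝ) (bb : Fin n → α → ℝ)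
    (hq : ∀ s a, a ∈ A s → ∀ s', 0 ≤ q s a s')
    (hbb : ∀ s a, a ∈ A s → 0 ≤ bb s a)
    (hrow : ∀ s a, a ∈ A s → (∑ s', q s a s') + bb s a ≤ 1)
    (xstar : Fin n → ℝ)
    (hfix : bellman A hA q bb xstar = xstar)
    (hx01 : ∀ s, 0 ≤ xstar s ∧ xstar s ≤ 1)
    (ℓ u : ℝ) (hℓ : ∀ s, ℓ ≤ xstar s) (hu : ∀ s, xstar s ≤ u)
    (k : ℕ) (π : Fin k → Fin n → α) (hπ : ∀ i s, π i s ∈ A s)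
    (hopt : ∀ s, xSched q bb k π s + ySched q k π s * u =
      (bellman A hA q bb)^[k] (fun _ => u) s)
    (sI : Fin n) (ε : ℝ) (hε : 0 < ε)
    (hstop : ySched q k π sI * (u - ℓ) < 2 * ε) :
    |(xSched q bb k π sI + ySched q k π sI * ((ℓ + u) / 2)) - xstar sI| < ε := by
  have hlow := lower_bound A hA q bb hq xstar hfix ℓ hℓ k π hπ sI
  have hhigh : xstar sI ≤ xSched q bb k π sI + ySched q k π sI * u := by
    rw [hopt sI]
    exact xstar_le_iter A hA q bb hq xstar hfix u hu k sI
  rw [abs_lt]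
  constructor <;> nlinarith
end
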